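/- arXiv:2512.04301 — 2 statements merged into one kernel-verified Lean document; each statement's English description precedes it below -/
import Mathlib

section
/- Let f = e^{-varphi} where varphi : R^n -> [0,infinity] is a proper l.s.c. convex function with varphi(0) = 0, and let f* = e^{-L(varphi)} be its Legendre dual. Define R_f = {x : f(x) >= e^{-50n}} and R_{f*} = {x : f*(x) >= e^{-50n}}. Then 50n (R_f)^polar is contained in R_{f*}, which is contained in 100n (R_f)^polar. -/
/-!
For `c > 0` write `K = {φ ≤ c}`. If `y ∈ K°` and `φ x > c`, then `φ(0) = 0` and convexity put
`(c / φ x) • x` in `K`, so `c ⟪x, y⟫ ≤ φ x`; hence `⟪x, c y⟫ - φ x ≤ c` for every `x`, i.e.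
`L(φ)(c y) ≤ c`. Conversely, if `L(φ)(y) ≤ c` then `⟪x, y⟫ ≤ c + φ x ≤ 2c` on `K`, so
`y ∈ 2c K°`. With `c = 50n` these are the two inclusions.
-/

open Set
open scoped ENNReal Pointwise

/-- The polar of a set `A ⊆ ℝⁿ`. -/
def polarSet {n : ℕ} (A : Set (EuclideanSpace ℝ (Fin n))) : Set (EuclideanSpace ℝ (Fin n)) :=
  {y | ∀ x ∈ A, (inner ℝ x y : ℝ) ≤ 1}

/-- The Legendre transform `L(φ)(y) = sup_x (⟪x,y⟫ - φ(x))`. -/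
noncomputable def legendre {n : ℕ} (φ : EuclideanSpace ℝ (Fin n) → ℝ≥0∞)
    (y : EuclideanSpace ℝ (Fin n)) : EReal :=
  ⨆ x : EuclideanSpace ℝ (Fin n), (((inner ℝ x y : ℝ) : EReal) - (φ x : EReal))

open scoped RealInnerProductSpace

lemma apply_smul_le_ofReal_mul {E : Type*} [AddCommGroup E] [Module ℝ E] {φ : E → ℝ≥0∞}
    (hconv : ∀ x y : E, ∀ a b : ℝ, 0 ≤ a → 0 ≤ b → a + b = 1 →
      φ (a • x + b • y) ≤ ENNReal.ofReal a * φ x + ENNReal.ofReal b * φ y)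
    (h0 : φ 0 = 0) (x : E) (t : ℝ) (ht0 : 0 ≤ t) (ht1 : t ≤ 1) :
    φ (t • x) ≤ ENNReal.ofReal t * φ x := by
  simpa [h0] using hconv x 0 t (1 - t) ht0 (by linarith) (by ring)

section

variable {n : ℕ} {φ : EuclideanSpace ℝ (Fin n) → ℝ≥0∞}

lemma legendre_le_coe_iff (y : EuclideanSpace ℝ (Fin n)) (c : ℝ) :
    legendre φ y ≤ c ↔ ∀ x, φ x ≠ ⊤ → ⟪x, y⟫ - (φ x).toReal ≤ c := by
  simp only [legendre, iSup_le_iff]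
  refine forall_congr' fun x => ?_
  rcases eq_or_ne (φ x) ⊤ with hx | hx
  · simp [hx]
  · rw [← EReal.coe_ennreal_toReal hx, ← EReal.coe_sub, EReal.coe_le_coe_iff]
    simp [hx]

lemma mul_inner_le_of_mem_polarSet_sublevel {c : ℝ} (hc : 0 ≤ c)
    (hstar : ∀ x, ∀ t : ℝ, 0 ≤ t → t ≤ 1 → φ (t • x) ≤ ENNReal.ofReal t * φ x)
    {y : EuclideanSpace ℝ (Fin n)} (hy : y ∈ polarSet {x | φ x ≤ ENNReal.ofReal c})
    {x : EuclideanSpace ℝ (Fin n)} (hx : φ x ≠ ⊤) :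
    c * ⟪x, y⟫ ≤ max c (φ x).toReal := by
  set a := (φ x).toReal
  rcases le_or_gt a c with hac | hca
  · have hxy : ⟪x, y⟫ ≤ 1 := hy x ((ENNReal.le_ofReal_iff_toReal_le hx hc).2 hac)
    calc c * ⟪x, y⟫ ≤ c * 1 := mul_le_mul_of_nonneg_left hxy hc
      _ ≤ max c a := by simp
  · have ha : 0 < a := hc.trans_lt hca
    set t := c / a
    have hta : t * a = c := div_mul_cancel₀ c ha.ne'
    have htx : φ (t • x) ≤ ENNReal.ofReal c :=
      calc φ (t • x) ≤ ENNReal.ofReal t * φ x :=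
            hstar x t (div_nonneg hc ha.le) ((div_le_one ha).2 hca.le)
        _ = ENNReal.ofReal c := by
            rw [← ENNReal.ofReal_toReal hx, ← ENNReal.ofReal_mul (div_nonneg hc ha.le), hta]
    have htxy : t * ⟪x, y⟫ ≤ 1 := real_inner_smul_left x y t ▸ hy _ htx
    calc c * ⟪x, y⟫ = a * (t * ⟪x, y⟫) := by rw [← hta]; ring
      _ ≤ a * 1 := mul_le_mul_of_nonneg_left htxy ha.le
      _ ≤ max c a := by simp

lemma smul_polarSet_sublevel_subset_legendre_le {c : ℝ} (hc : 0 ≤ c)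
    (hstar : ∀ x, ∀ t : ℝ, 0 ≤ t → t ≤ 1 → φ (t • x) ≤ ENNReal.ofReal t * φ x) :
    c • polarSet {x | φ x ≤ ENNReal.ofReal c} ⊆ {y | legendre φ y ≤ c} := by
  rintro _ ⟨y, hy, rfl⟩
  refine (legendre_le_coe_iff _ _).2 fun x hx => ?_
  have hxy := mul_inner_le_of_mem_polarSet_sublevel hc hstar hy hx
  rw [real_inner_smul_right]
  rcases max_cases c (φ x).toReal with ⟨hmax, -⟩ | ⟨hmax, -⟩ <;>
    linarith [ENNReal.toReal_nonneg (a := φ x)]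

lemma legendre_le_subset_smul_polarSet_sublevel {c : ℝ} (hc : 0 < c) :
    {y | legendre φ y ≤ c} ⊆ (2 * c) • polarSet {x | φ x ≤ ENNReal.ofReal c} := by
  intro y hy
  rw [mem_smul_set_iff_inv_smul_mem₀ (by positivity)]
  intro x hx
  have hxy := (legendre_le_coe_iff y c).1 hy x (ne_top_of_le_ne_top ENNReal.ofReal_ne_top hx)
  have hφx : (φ x).toReal ≤ c := ENNReal.toReal_le_of_le_ofReal hc.le hx
  rw [real_inner_smul_right, inv_mul_le_iff₀ (by positivity)]
  linarith

end

theorem stmt11_general {n : ℕ} (hn : 1 ≤ n) (φ : EuclideanSpace ℝ (Fin n) → ℝ≥0∞)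
    (hconv : ∀ x y : EuclideanSpace ℝ (Fin n), ∀ a b : ℝ, 0 ≤ a → 0 ≤ b → a + b = 1 →
      φ (a • x + b • y) ≤ ENNReal.ofReal a * φ x + ENNReal.ofReal b * φ y)
    (h0 : φ 0 = 0) :
    (50 * (n : ℝ)) • polarSet {x | φ x ≤ (50 * (n : ℝ≥0∞))}
        ⊆ {y | legendre φ y ≤ ((50 * (n : ℝ)) : EReal)} ∧
    {y | legendre φ y ≤ ((50 * (n : ℝ)) : EReal)}
        ⊆ (100 * (n : ℝ)) • polarSet {x | φ x ≤ (50 * (n : ℝ≥0∞))} := by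
  have hc : (0 : ℝ) < 50 * n := by
    have : (1 : ℝ) ≤ n := by exact_mod_cast hn
    positivity
  have hlevel : (50 * (n : ℝ≥0∞)) = ENNReal.ofReal (50 * n) := by
    rw [ENNReal.ofReal_mul (by norm_num)]; simp
  have hbound : ((50 * (n : ℝ)) : EReal) = ((50 * n : ℝ) : EReal) := by
    rw [EReal.coe_mul]; rfl
  rw [hlevel, hbound, show (100 * (n : ℝ)) = 2 * (50 * n) by ring]
  exact ⟨smul_polarSet_sublevel_subset_legendre_le hc.le (apply_smul_le_ofReal_mul hconv h0),
    legendre_le_subset_smul_polarSet_sublevel hc⟩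

/-- Let `f = e^{-φ}` with `φ` a proper l.s.c. convex function, `φ(0) = 0`, and let
`f* = e^{-L(φ)}` be its Legendre dual. With `R_f = {f ≥ e^{-50n}} = {φ ≤ 50n}` and
`R_{f*} = {f* ≥ e^{-50n}} = {L(φ) ≤ 50n}`, one has
`50n (R_f)° ⊆ R_{f*} ⊆ 100n (R_f)°`. -/
theorem stmt11 {n : ℕ} (hn : 1 ≤ n) (φ : EuclideanSpace ℝ (Fin n) → ℝ≥0∞)
    (hproper : ∃ x, φ x ≠ ⊤)
    (hlsc : LowerSemicontinuous φ)
    (hconv : ∀ x y : EuclideanSpace ℝ (Fin n), ∀ a b : ℝ, 0 ≤ a → 0 ≤ b → a + b = 1 →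
      φ (a • x + b • y) ≤ ENNReal.ofReal a * φ x + ENNReal.ofReal b * φ y)
    (h0 : φ 0 = 0) :
    (50 * (n : ℝ)) • polarSet {x | φ x ≤ (50 * (n : ℝ≥0∞))}
        ⊆ {y | legendre φ y ≤ ((50 * (n : ℝ)) : EReal)} ∧
    {y | legendre φ y ≤ ((50 * (n : ℝ)) : EReal)}
        ⊆ (100 * (n : ℝ)) • polarSet {x | φ x ≤ (50 * (n : ℝ≥0∞))} :=
  stmt11_general hn φ hconv h0
end

section
/- Let varphi : R^n -> [0,infinity] be a geometric convex function (proper, l.s.c., convex, varphi(0) = 0) and define its polar varphi^circ(x) = sup_y (<x,y> - 1)/varphi(y). Then for every t > 0, ({x : varphi(x) < 1/t})^polar is contained in {x : varphi^circ(x) <= t}, which is contained in 2 ({x : varphi(x) < 1/t})^polar. -/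
open Set
open scoped ENNReal Pointwise

/-- The polarity (`𝒜`-transform) of a geometric convex function:
`φ°(x) = sup_y (⟪x,y⟫ - 1)/φ(y)`, valued in `[0,∞]` (with the usual `ℝ≥0∞` division
conventions handling the cases `φ(y) = 0` and `φ(y) = ∞`). -/
noncomputable def Atrans {n : ℕ} (φ : EuclideanSpace ℝ (Fin n) → ℝ≥0∞)
    (x : EuclideanSpace ℝ (Fin n)) : ℝ≥0∞ :=
  ⨆ y : EuclideanSpace ℝ (Fin n), ENNReal.ofReal ((inner ℝ x y : ℝ) - 1) / φ y

/-!
Since `φ` is convex with `φ 0 = 0`, `φ (s • y) ≤ s φ y` for `s ∈ [0, 1]`. For `x` in the polar of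
`{φ < 1/t}` and `φ y` finite, the point `y / (1 + t φ y)` lies in that sublevel set, whence
`⟪x, y⟫ - 1 ≤ t φ y`; for every `y` this inequality is equivalent to `φ° x ≤ t`. Conversely,
`φ° x ≤ t` and `φ y < 1/t` give `⟪x, y⟫ ≤ 1 + t φ y < 2`, so `x / 2` lies in the polar.
-/

lemma apply_smul_le_of_convex {E : Type*} [AddCommGroup E] [Module ℝ E] {φ : E → ℝ≥0∞}
    (hconv : ∀ x y : E, ∀ a b : ℝ, 0 ≤ a → 0 ≤ b → a + b = 1 →
      φ (a • x + b • y) ≤ ENNReal.ofReal a * φ x + ENNReal.ofReal b * φ y)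
    (h0 : φ 0 = 0) {s : ℝ} (hs0 : 0 ≤ s) (hs1 : s ≤ 1) (y : E) :
    φ (s • y) ≤ ENNReal.ofReal s * φ y := by
  simpa [h0] using hconv y 0 s (1 - s) hs0 (by linarith) (by ring)

variable {n : ℕ} {φ : EuclideanSpace ℝ (Fin n) → ℝ≥0∞} {t : ℝ}

lemma Atrans_le_ofReal_iff (ht : 0 < t) (x : EuclideanSpace ℝ (Fin n)) :
    Atrans φ x ≤ ENNReal.ofReal t ↔
      ∀ y, ENNReal.ofReal (inner ℝ x y - 1) ≤ ENNReal.ofReal t * φ y := by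
  simp only [Atrans, iSup_le_iff]
  refine forall_congr' fun y => ENNReal.div_le_iff_le_mul (Or.inr ENNReal.ofReal_ne_top) ?_
  exact Or.inr (ENNReal.ofReal_pos.2 ht).ne'

lemma inner_le_one_add_mul_of_mem_polarSet
    (hstar : ∀ s : ℝ, 0 ≤ s → s ≤ 1 → ∀ y, φ (s • y) ≤ ENNReal.ofReal s * φ y)
    (ht : 0 < t) {x : EuclideanSpace ℝ (Fin n)}
    (hx : x ∈ polarSet {z | φ z < ENNReal.ofReal (1 / t)}) {y : EuclideanSpace ℝ (Fin n)}
    (hy : φ y ≠ ⊤) :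
    inner ℝ x y ≤ 1 + t * (φ y).toReal := by
  set c := (φ y).toReal
  have hc : 0 ≤ c := ENNReal.toReal_nonneg
  have hden : 0 < 1 + t * c := by positivity
  set s := 1 / (1 + t * c)
  have hs0 : 0 < s := by positivity
  have hmem : φ (s • y) < ENNReal.ofReal (1 / t) := calc
    φ (s • y) ≤ ENNReal.ofReal s * φ y :=
      hstar s hs0.le ((div_le_one hden).2 (le_add_of_nonneg_right (by positivity))) y
    _ = ENNReal.ofReal (s * c) := by
      rw [ENNReal.ofReal_mul hs0.le, ENNReal.ofReal_toReal hy]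
    _ < ENNReal.ofReal (1 / t) := by
      refine (ENNReal.ofReal_lt_ofReal_iff (by positivity)).2 ?_
      rw [div_mul_eq_mul_div, one_mul, div_lt_div_iff₀ hden ht]
      linarith
  have hsx : s * inner ℝ x y ≤ 1 := by
    simpa [real_inner_comm, real_inner_smul_right] using hx _ hmem
  rwa [← le_div_iff₀' hs0, one_div_one_div] at hsx

lemma polarSet_subset_setOf_Atrans_le
    (hstar : ∀ s : ℝ, 0 ≤ s → s ≤ 1 → ∀ y, φ (s • y) ≤ ENNReal.ofReal s * φ y)
    (ht : 0 < t) :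
    polarSet {x | φ x < ENNReal.ofReal (1 / t)} ⊆ {x | Atrans φ x ≤ ENNReal.ofReal t} := by
  intro x hx
  refine (Atrans_le_ofReal_iff ht x).2 fun y => ?_
  rcases eq_or_ne (φ y) ⊤ with hy | hy
  · simp [hy, ENNReal.mul_top (ENNReal.ofReal_pos.2 ht).ne']
  rw [← ENNReal.ofReal_toReal hy, ← ENNReal.ofReal_mul ht.le]
  refine ENNReal.ofReal_le_ofReal ?_
  linarith [inner_le_one_add_mul_of_mem_polarSet hstar ht hx hy]

lemma inner_le_two_of_Atrans_le (ht : 0 < t) {x : EuclideanSpace ℝ (Fin n)}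
    (hx : Atrans φ x ≤ ENNReal.ofReal t) {y : EuclideanSpace ℝ (Fin n)}
    (hy : φ y < ENNReal.ofReal (1 / t)) :
    inner ℝ x y ≤ 2 := by
  have hle : ENNReal.ofReal (inner ℝ x y - 1) ≤ ENNReal.ofReal 1 := calc
    ENNReal.ofReal (inner ℝ x y - 1) ≤ ENNReal.ofReal t * φ y :=
      (Atrans_le_ofReal_iff ht x).1 hx y
    _ ≤ ENNReal.ofReal t * ENNReal.ofReal (1 / t) := by gcongr
    _ = ENNReal.ofReal 1 := by rw [← ENNReal.ofReal_mul ht.le, mul_one_div_cancel ht.ne']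
  linarith [(ENNReal.ofReal_le_ofReal_iff zero_le_one).1 hle]

lemma setOf_Atrans_le_subset_two_smul_polarSet (ht : 0 < t) :
    {x | Atrans φ x ≤ ENNReal.ofReal t}
      ⊆ (2 : ℝ) • polarSet {x | φ x < ENNReal.ofReal (1 / t)} := by
  intro x hx
  rw [mem_smul_set_iff_inv_smul_mem₀ two_ne_zero]
  intro y hy
  rw [real_inner_smul_right, real_inner_comm]
  linarith [inner_le_two_of_Atrans_le ht hx hy]

theorem stmt12_general {n : ℕ} (φ : EuclideanSpace ℝ (Fin n) → ℝ≥0∞)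
    (hconv : ∀ x y : EuclideanSpace ℝ (Fin n), ∀ a b : ℝ, 0 ≤ a → 0 ≤ b → a + b = 1 →
      φ (a • x + b • y) ≤ ENNReal.ofReal a * φ x + ENNReal.ofReal b * φ y)
    (h0 : φ 0 = 0)
    (t : ℝ) (ht : 0 < t) :
    polarSet {x | φ x < ENNReal.ofReal (1 / t)} ⊆ {x | Atrans φ x ≤ ENNReal.ofReal t} ∧
    {x | Atrans φ x ≤ ENNReal.ofReal t}
      ⊆ (2 : ℝ) • polarSet {x | φ x < ENNReal.ofReal (1 / t)} :=
  ⟨polarSet_subset_setOf_Atrans_le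
      (fun _ hs0 hs1 y => apply_smul_le_of_convex hconv h0 hs0 hs1 y) ht,
    setOf_Atrans_le_subset_two_smul_polarSet ht⟩

/-- Milman–Rotem: if `φ` is a geometric convex function (proper, l.s.c., convex, `φ(0)=0`),
then for every `t > 0`,
`({φ < 1/t})° ⊆ {φ° ≤ t} ⊆ 2({φ < 1/t})°`. -/
theorem stmt12 {n : ℕ} (φ : EuclideanSpace ℝ (Fin n) → ℝ≥0∞)
    (hproper : ∃ x, φ x ≠ ⊤)
    (hlsc : LowerSemicontinuous φ)
    (hconv : ∀ x y : EuclideanSpace ℝ (Fin n), ∀ a b : ℝ, 0 ≤ a → 0 ≤ b → a + b = 1 →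
      φ (a • x + b • y) ≤ ENNReal.ofReal a * φ x + ENNReal.ofReal b * φ y)
    (h0 : φ 0 = 0)
    (t : ℝ) (ht : 0 < t) :
    polarSet {x | φ x < ENNReal.ofReal (1 / t)} ⊆ {x | Atrans φ x ≤ ENNReal.ofReal t} ∧
    {x | Atrans φ x ≤ ENNReal.ofReal t}
      ⊆ (2 : ℝ) • polarSet {x | φ x < ENNReal.ofReal (1 / t)} :=
  stmt12_general φ hconv h0 t ht
end
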